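/- Let W ∈ ℝ^{N×N} be symmetric and doubly stochastic, t ≥ 1 an integer, and let σ₂ denote the spectral norm of W − (1/N)𝟙𝟙ᵀ. Let F_{i,k} ∈ ℝ^{n×r} be arbitrary matrices, Y_{i,0} := F_{i,0}, and Y_{i,k+1} := Σ_j (W^t)_{ij} Y_{j,k} + F_{i,k+1} − F_{i,k}. Write F̄_k := (1/N)Σ_i F_{i,k}. Then for all k ≥ 0: (Σ_i ‖Y_{i,k+1} − F̄_{k+1}‖_F²)^{1/2} ≤ σ₂^t (Σ_i ‖Y_{i,k} − F̄_k‖_F²)^{1/2} + (Σ_i ‖F_{i,k+1} − F_{i,k}‖_F²)^{1/2}. -/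

import Mathlib

open Matrix
open scoped BigOperators

noncomputable section

/-- the Frobenius norm of a real matrix -/
def frob {n r : ℕ} (A : Matrix (Fin n) (Fin r) ℝ) : ℝ :=
  Real.sqrt (∑ i, ∑ j, (A i j) ^ 2)

/-- the spectral norm (operator 2-norm) of a matrix -/
def spec {m k : ℕ} (A : Matrix (Fin m) (Fin k) ℝ) : ℝ :=
  ‖LinearMap.toContinuousLinearMap (Matrix.toEuclideanLin A)‖

/-!
Stack the matrices of the `N` nodes as the rows of one `N × (n r)` matrix and let
`P = (1/N) 𝟙𝟙ᵀ`. The recursion becomes `𝒴ₖ₊₁ = Wᵗ 𝒴ₖ + ℱₖ₊₁ - ℱₖ`, and `P W = P` shows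
`P 𝒴ₖ = P ℱₖ`, so the tracking error is `(1 - P) 𝒴ₖ`. As `W P = P W = P`, one has
`(1 - P) Wᵗ = (W - P)ᵗ (1 - P)`, hence the error evolves as
`eₖ₊₁ = (W - P)ᵗ eₖ + (1 - P)(ℱₖ₊₁ - ℱₖ)`. The claim follows from the triangle inequality,
`‖A M‖_F ≤ ‖A‖₂ ‖M‖_F` (column by column) and `‖(1 - P) v‖ ≤ ‖v‖`.
-/

open WithLp

attribute [local instance] Matrix.frobeniusNormedAddCommGroup

section Ring

variable {R : Type*} [Ring R]

lemma mul_pow_eq_of_mul_eq {p w : R} (h : p * w = p) (t : ℕ) : p * w ^ t = p := by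
  induction t with
  | zero => rw [pow_zero, mul_one]
  | succ t ih => rw [pow_succ, ← mul_assoc, ih, h]

lemma sub_pow_mul_one_sub {w p : R} (hwp : w * p = p) (hpw : p * w = p) (hp : p * p = p)
    (t : ℕ) : (w - p) ^ t * (1 - p) = (1 - p) * w ^ t := by
  have hstep : (w - p) * (1 - p) = (1 - p) * w := by
    simp only [mul_sub, sub_mul, mul_one, one_mul, hwp, hpw, hp, sub_self, sub_zero]
  induction t with
  | zero => rw [pow_zero, pow_zero, one_mul, mul_one]
  | succ t ih => rw [pow_succ', mul_assoc, ih, ← mul_assoc, hstep, mul_assoc, ← pow_succ']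

end Ring

section Averaging

variable {N : ℕ}

def averaging (N : ℕ) : Matrix (Fin N) (Fin N) ℝ :=
  (N : ℝ)⁻¹ • of fun _ _ => 1

lemma averaging_apply (i j : Fin N) : averaging N i j = (N : ℝ)⁻¹ := by
  simp [averaging]

lemma mul_averaging {W : Matrix (Fin N) (Fin N) ℝ} (hrow : ∀ i, ∑ j, W i j = 1) :
    W * averaging N = averaging N := by
  ext i j
  simp only [mul_apply, averaging_apply, ← Finset.sum_mul, hrow, one_mul]

lemma averaging_mul {W : Matrix (Fin N) (Fin N) ℝ} (hcol : ∀ j, ∑ i, W i j = 1) :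
    averaging N * W = averaging N := by
  ext i j
  simp only [mul_apply, averaging_apply, ← Finset.mul_sum, hcol, mul_one]

lemma averaging_mul_self (N : ℕ) : averaging N * averaging N = averaging N := by
  rcases N.eq_zero_or_pos with rfl | hN
  · exact Subsingleton.elim _ _
  · refine averaging_mul fun j => ?_
    simp [averaging_apply, hN.ne']

lemma averaging_mulVec (v : Fin N → ℝ) (i : Fin N) :
    (averaging N *ᵥ v) i = (N : ℝ)⁻¹ * ∑ j, v j := by
  simp [mulVec, dotProduct, averaging_apply, Finset.mul_sum]

lemma sum_sub_mean_sq_le (x : Fin N → ℝ) :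
    ∑ i, (x i - (N : ℝ)⁻¹ * ∑ j, x j) ^ 2 ≤ ∑ i, x i ^ 2 := by
  rcases N.eq_zero_or_pos with rfl | hN
  · simp
  set m := (N : ℝ)⁻¹ * ∑ j, x j
  have hsum : ∑ j, x j = N * m := by simp only [m]; field_simp
  have hexpand : ∑ i, (x i - m) ^ 2 = ∑ i, x i ^ 2 - N * m ^ 2 := by
    simp only [sub_sq, Finset.sum_add_distrib, Finset.sum_sub_distrib, ← Finset.sum_mul,
      ← Finset.mul_sum, hsum, Finset.sum_const, Finset.card_univ, Fintype.card_fin, nsmul_eq_mul]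
    ring
  rw [hexpand]
  nlinarith [sq_nonneg m, Nat.cast_nonneg (α := ℝ) N]

lemma norm_one_sub_averaging_mulVec_le (v : Fin N → ℝ) :
    ‖toLp 2 ((1 - averaging N) *ᵥ v)‖ ≤ ‖toLp 2 v‖ := by
  simp only [EuclideanSpace.norm_eq, sub_mulVec, one_mulVec, Pi.sub_apply, averaging_mulVec,
    Real.norm_eq_abs, sq_abs]
  exact Real.sqrt_le_sqrt (sum_sub_mean_sq_le v)

end Averaging

section Frobenius

lemma spec_nonneg {m k : ℕ} (A : Matrix (Fin m) (Fin k) ℝ) : 0 ≤ spec A :=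
  norm_nonneg _

lemma norm_mulVec_le_spec {m k : ℕ} (A : Matrix (Fin m) (Fin k) ℝ) (v : Fin k → ℝ) :
    ‖toLp 2 (A *ᵥ v)‖ ≤ spec A * ‖toLp 2 v‖ :=
  (LinearMap.toContinuousLinearMap (toEuclideanLin A)).le_opNorm (toLp 2 v)

variable {ι : Type*} [Fintype ι]

lemma frobenius_norm_mul_le_of_mulVec {m k : Type*} [Fintype m] [Fintype k] {A : Matrix m k ℝ}
    {c : ℝ} (hc : 0 ≤ c) (hA : ∀ v, ‖toLp 2 (A *ᵥ v)‖ ≤ c * ‖toLp 2 v‖) (M : Matrix k ι ℝ) :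
    ‖A * M‖ ≤ c * ‖M‖ := by
  rw [← frobenius_norm_transpose, ← frobenius_norm_transpose M]
  change ‖toLp 2 fun q => toLp 2 ((A * M)ᵀ q)‖ ≤ c * ‖toLp 2 fun q => toLp 2 (Mᵀ q)‖
  have hcol : ∀ q, (A * M)ᵀ q = A *ᵥ Mᵀ q := fun q => by
    ext; simp [mul_apply, mulVec, dotProduct]
  rw [PiLp.norm_eq_of_L2, PiLp.norm_eq_of_L2, ← Real.sqrt_sq hc, ← Real.sqrt_mul (sq_nonneg c),
    Finset.mul_sum]
  gcongr with q
  change ‖toLp 2 ((A * M)ᵀ q)‖ ^ 2 ≤ c ^ 2 * ‖toLp 2 (Mᵀ q)‖ ^ 2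
  rw [hcol, ← mul_pow]
  exact pow_le_pow_left₀ (norm_nonneg _) (hA _) 2

lemma frobenius_norm_mul_le_spec {m k : ℕ} (A : Matrix (Fin m) (Fin k) ℝ)
    (M : Matrix (Fin k) ι ℝ) : ‖A * M‖ ≤ spec A * ‖M‖ :=
  frobenius_norm_mul_le_of_mulVec (spec_nonneg A) (norm_mulVec_le_spec A) M

lemma frobenius_norm_pow_mul_le_spec {N : ℕ} (A : Matrix (Fin N) (Fin N) ℝ) (t : ℕ)
    (M : Matrix (Fin N) ι ℝ) : ‖A ^ t * M‖ ≤ spec A ^ t * ‖M‖ := by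
  induction t generalizing M with
  | zero => rw [pow_zero, pow_zero, Matrix.one_mul, one_mul]
  | succ t ih =>
    calc ‖A ^ (t + 1) * M‖ = ‖A ^ t * (A * M)‖ := by rw [pow_succ, Matrix.mul_assoc]
      _ ≤ spec A ^ t * ‖A * M‖ := ih _
      _ ≤ spec A ^ t * (spec A * ‖M‖) := by
        gcongr
        · exact pow_nonneg (spec_nonneg A) t
        · exact frobenius_norm_mul_le_spec A M
      _ = spec A ^ (t + 1) * ‖M‖ := by ring

lemma frobenius_norm_one_sub_averaging_mul_le {N : ℕ} (M : Matrix (Fin N) ι ℝ) :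
    ‖(1 - averaging N) * M‖ ≤ ‖M‖ := by
  simpa using frobenius_norm_mul_le_of_mulVec zero_le_one
    (by simpa using norm_one_sub_averaging_mulVec_le) M

end Frobenius

section Stack

variable {ι m n R : Type*}

/-- Row `i` of `stack X` is `X i` flattened, so that `∑ j, A i j • X j` becomes `A * stack X`
and the Frobenius norm of `stack X` is `(∑ i, ‖X i‖_F ²)^(1/2)`. -/
def stack [Semiring R] : (ι → Matrix m n R) →ₗ[R] Matrix ι (m × n) R where
  toFun X := of fun i q => X i q.1 q.2
  map_add' _ _ := rfl
  map_smul' _ _ := rfl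

lemma stack_apply [Semiring R] (X : ι → Matrix m n R) (i : ι) (q : m × n) :
    stack X i q = X i q.1 q.2 := rfl

lemma stack_sum_smul {κ : Type*} [Fintype ι] [CommSemiring R] (A : Matrix κ ι R)
    (X : ι → Matrix m n R) : stack (fun l => ∑ j, A l j • X j) = A * stack X := by
  ext l q
  simp [stack_apply, mul_apply, Matrix.sum_apply]

lemma stack_average {N : ℕ} (X : Fin N → Matrix m n ℝ) :
    stack (fun _ => (N : ℝ)⁻¹ • ∑ i, X i) = averaging N * stack X := by
  rw [← stack_sum_smul]
  simp only [averaging_apply, Finset.smul_sum]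

lemma norm_stack [Fintype ι] {n r : ℕ} (X : ι → Matrix (Fin n) (Fin r) ℝ) :
    ‖stack X‖ = √(∑ i, frob (X i) ^ 2) := by
  change ‖toLp 2 fun i => toLp 2 fun q => stack X i q‖ = _
  rw [PiLp.norm_eq_of_L2]
  congr 1
  refine Finset.sum_congr rfl fun i _ => ?_
  rw [PiLp.norm_eq_of_L2, frob, Fintype.sum_prod_type]
  simp [stack_apply]

end Stack

section Tracking

variable {m ι : Type*} [Fintype m] {y f : ℕ → Matrix m ι ℝ}

lemma averaging_mul_tracking_eq {A p : Matrix m m ℝ} (hpA : p * A = p) (hy0 : y 0 = f 0)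
    (hy : ∀ k, y (k + 1) = A * y k + (f (k + 1) - f k)) (k : ℕ) : p * y k = p * f k := by
  induction k with
  | zero => rw [hy0]
  | succ k ih => rw [hy, Matrix.mul_add, ← Matrix.mul_assoc, hpA, ih, Matrix.mul_sub]; abel

lemma one_sub_mul_tracking_succ [DecidableEq m] {W p : Matrix m m ℝ} (hwp : W * p = p)
    (hpw : p * W = p) (hp : p * p = p) {t : ℕ}
    (hy : ∀ k, y (k + 1) = W ^ t * y k + (f (k + 1) - f k)) (k : ℕ) :
    (1 - p) * y (k + 1) = (W - p) ^ t * ((1 - p) * y k) + (1 - p) * (f (k + 1) - f k) := by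
  rw [hy, Matrix.mul_add, ← Matrix.mul_assoc, ← Matrix.mul_assoc, sub_pow_mul_one_sub hwp hpw hp]

end Tracking

theorem gradient_tracking_error_contraction_general {n r N : ℕ}
    (W : Matrix (Fin N) (Fin N) ℝ)
    (hrow : ∀ i, ∑ j, W i j = 1) (hcol : ∀ j, ∑ i, W i j = 1)
    (t : ℕ)
    (σ₂ : ℝ) (hσ₂ : σ₂ = spec (W - (N : ℝ)⁻¹ • Matrix.of (fun _ _ => (1 : ℝ))))
    (F Y : ℕ → Fin N → Matrix (Fin n) (Fin r) ℝ)
    (hY0 : ∀ i, Y 0 i = F 0 i)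
    (hYrec : ∀ k i, Y (k + 1) i = (∑ j, (W ^ t) i j • Y k j) + F (k + 1) i - F k i)
    (Fbar : ℕ → Matrix (Fin n) (Fin r) ℝ)
    (hFbar : ∀ k, Fbar k = (N : ℝ)⁻¹ • ∑ i, F k i) :
    ∀ k, Real.sqrt (∑ i, frob (Y (k + 1) i - Fbar (k + 1)) ^ 2) ≤
      σ₂ ^ t * Real.sqrt (∑ i, frob (Y k i - Fbar k) ^ 2) +
        Real.sqrt (∑ i, frob (F (k + 1) i - F k i) ^ 2) := by
  have hy : ∀ k, stack (Y (k + 1)) = W ^ t * stack (Y k) + (stack (F (k + 1)) - stack (F k)) := by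
    intro k
    rw [← stack_sum_smul, ← map_sub, ← map_add]
    congr 1
    funext i
    rw [hYrec, Pi.add_apply, Pi.sub_apply, add_sub_assoc]
  have htrack := averaging_mul_tracking_eq (y := fun k => stack (Y k))
    (f := fun k => stack (F k)) (mul_pow_eq_of_mul_eq (averaging_mul hcol) t)
    (by rw [funext hY0]) hy
  have herr : ∀ k, stack (fun i => Y k i - Fbar k) = (1 - averaging N) * stack (Y k) := by
    intro k
    rw [Matrix.sub_mul, Matrix.one_mul, htrack k, ← stack_average, ← hFbar, ← map_sub]
    rfl
  intro k
  rw [← norm_stack, ← norm_stack, ← norm_stack, herr, herr,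
    one_sub_mul_tracking_succ (y := fun k => stack (Y k)) (f := fun k => stack (F k))
      (mul_averaging hrow) (averaging_mul hcol) (averaging_mul_self N) hy]
  refine (norm_add_le _ _).trans (add_le_add ?_ ?_)
  · exact hσ₂ ▸ frobenius_norm_pow_mul_le_spec _ t _
  · exact (frobenius_norm_one_sub_averaging_mul_le _).trans_eq (by rw [← map_sub]; rfl)

/-- one-step contraction of the gradient-tracking error: with
`σ₂ = ‖W − (1/N)𝟙𝟙ᵀ‖₂`, `Y_{i,0} = F_{i,0}`,
`Y_{i,k+1} = Σ_j (Wᵗ)_{ij} Y_{j,k} + F_{i,k+1} − F_{i,k}` and `F̄_k = (1/N)Σ_i F_{i,k}`,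
`(Σ_i ‖Y_{i,k+1} − F̄_{k+1}‖²)^{1/2} ≤ σ₂ᵗ (Σ_i ‖Y_{i,k} − F̄_k‖²)^{1/2}
  + (Σ_i ‖F_{i,k+1} − F_{i,k}‖²)^{1/2}`. -/
theorem gradient_tracking_error_contraction {n r N : ℕ}
    (W : Matrix (Fin N) (Fin N) ℝ)
    (hsymm : W.IsSymm)
    (hrow : ∀ i, ∑ j, W i j = 1) (hcol : ∀ j, ∑ i, W i j = 1)
    (t : ℕ) (ht : 1 ≤ t)
    (σ₂ : ℝ) (hσ₂ : σ₂ = spec (W - (N : ℝ)⁻¹ • Matrix.of (fun _ _ => (1 : ℝ))))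
    (F Y : ℕ → Fin N → Matrix (Fin n) (Fin r) ℝ)
    (hY0 : ∀ i, Y 0 i = F 0 i)
    (hYrec : ∀ k i, Y (k + 1) i = (∑ j, (W ^ t) i j • Y k j) + F (k + 1) i - F k i)
    (Fbar : ℕ → Matrix (Fin n) (Fin r) ℝ)
    (hFbar : ∀ k, Fbar k = (N : ℝ)⁻¹ • ∑ i, F k i) :
    ∀ k, Real.sqrt (∑ i, frob (Y (k + 1) i - Fbar (k + 1)) ^ 2) ≤
      σ₂ ^ t * Real.sqrt (∑ i, frob (Y k i - Fbar k) ^ 2) +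
        Real.sqrt (∑ i, frob (F (k + 1) i - F k i) ^ 2) :=
  gradient_tracking_error_contraction_general W hrow hcol t σ₂ hσ₂ F Y hY0 hYrec Fbar hFbar

end
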